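/- arXiv:1511.00243 — 4 statements merged into one kernel-verified Lean document; each statement's English description precedes it below -/
import Mathlib

section
/- Let S be a sequence of 2q letters each colored blue or red, with height function h defined by h(0)=0, h(i)=h(i−1)+1 if the i-th letter is blue and h(i)=h(i−1)−1 if red. Suppose h(2q)=0, h(i)≠0 for all 1 ≤ i ≤ 2q−1, and the first letter is blue. Then for each j, the position of the j-th blue letter in S is strictly less than the position of the j-th red letter in S. -/
/-!
The hypotheses force the height to stay nonnegative: it starts with a blue step and can only
return to `0` at the very end. If `r` is the position of the `j`-th red letter, the height just
after `r` is `≥ 0` and the step at `r` is `-1`, so before `r` there are strictly more blue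
letters than the `j` red ones; hence the `j`-th blue letter comes before `r`.
-/

open Finset

/-- The height at `i`: number of blue (`true`) letters minus number of red (`false`)
letters among the first `i` letters of `S`. -/
def height (N : ℕ) (S : Fin N → Bool) (i : ℕ) : ℤ :=
  ((univ.filter (fun j : Fin N => j.val < i ∧ S j = true)).card : ℤ) -
  ((univ.filter (fun j : Fin N => j.val < i ∧ S j = false)).card : ℤ)

section OrderIsoOfFin

variable {α : Type*} [LinearOrder α] (T : Finset α) {m : ℕ} (h : #T = m) (k : Fin m)

theorem Finset.card_filter_lt_orderIsoOfFin :
    #{x ∈ T | x < (T.orderIsoOfFin h k : α)} = k := by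
  have himage : {x ∈ T | x < (T.orderIsoOfFin h k : α)} = (Iio k).image (T.orderEmbOfFin h) := by
    ext x
    simp only [mem_filter, mem_image, mem_Iio]
    constructor
    · rintro ⟨hx, hlt⟩
      refine ⟨(T.orderIsoOfFin h).symm ⟨x, hx⟩, ?_,
        congrArg Subtype.val ((T.orderIsoOfFin h).apply_symm_apply ⟨x, hx⟩)⟩
      rw [← (T.orderIsoOfFin h).lt_iff_lt, OrderIso.apply_symm_apply]
      exact hlt
    · rintro ⟨k', hk', rfl⟩
      exact ⟨T.orderEmbOfFin_mem h k', (T.orderEmbOfFin h).lt_iff_lt.mpr hk'⟩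
  rw [himage, card_image_of_injective _ (T.orderEmbOfFin h).injective, Fin.card_Iio]

theorem Finset.orderIsoOfFin_lt_of_lt_card_filter_lt {a : α}
    (hk : (k : ℕ) < #{x ∈ T | x < a}) :
    (T.orderIsoOfFin h k : α) < a := by
  by_contra! hle
  have hsub : {x ∈ T | x < a} ⊆ {x ∈ T | x < (T.orderIsoOfFin h k : α)} :=
    fun x hx => by
      rw [mem_filter] at hx ⊢
      exact ⟨hx.1, hx.2.trans_le hle⟩
  have hcard := card_le_card hsub
  rw [T.card_filter_lt_orderIsoOfFin h k] at hcard
  omega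

end OrderIsoOfFin

theorem Fin.card_filter_val_lt_succ {N i : ℕ} (hi : i < N) (p : Fin N → Prop)
    [DecidablePred p] :
    #{j : Fin N | j.val < i + 1 ∧ p j}
      = #{j : Fin N | j.val < i ∧ p j} + if p ⟨i, hi⟩ then 1 else 0 := by
  have hsingle : (if p ⟨i, hi⟩ then 1 else 0)
      = ∑ j : Fin N, if j = ⟨i, hi⟩ then (if p j then 1 else 0) else 0 := by
    simp
  rw [card_filter, card_filter, hsingle, ← sum_add_distrib]
  refine sum_congr rfl fun j _ => ?_
  rcases lt_trichotomy j.val i with hj | hj | hj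
  · have : j ≠ ⟨i, hi⟩ := Fin.ne_of_val_ne hj.ne
    simp [hj, Nat.lt_succ_of_lt hj, this]
  · obtain rfl : j = ⟨i, hi⟩ := Fin.ext hj
    simp
  · have : j ≠ ⟨i, hi⟩ := Fin.ne_of_val_ne hj.ne'
    simp [hj.not_gt, (Nat.succ_le_of_lt hj).not_gt, this]

section Height

variable {N : ℕ} (S : Fin N → Bool)

theorem height_zero : height N S 0 = 0 := by
  simp [height]

theorem height_succ {i : ℕ} (hi : i < N) :
    height N S (i + 1) = height N S i + if S ⟨i, hi⟩ then 1 else -1 := by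
  unfold height
  rw [Fin.card_filter_val_lt_succ hi, Fin.card_filter_val_lt_succ hi]
  cases S ⟨i, hi⟩ <;> simp <;> ring

theorem height_eq_card_filter_lt_sub (i : Fin N) :
    height N S i = #{x ∈ univ.filter (fun y => S y = true) | x < i}
      - #{x ∈ univ.filter (fun y => S y = false) | x < i} := by
  simp only [height, filter_filter, Fin.lt_def, and_comm]

theorem height_nonneg (h0 : 0 < N) (hfirst : S ⟨0, h0⟩ = true)
    (hne : ∀ i, 1 ≤ i → i ≤ N - 1 → height N S i ≠ 0) {i : ℕ} (hi : i ≤ N) :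
    0 ≤ height N S i := by
  induction i with
  | zero => rw [height_zero]
  | succ n ih =>
    rw [height_succ S (by omega : n < N)]
    rcases Nat.eq_zero_or_pos n with rfl | hn
    · simp [height_zero, hfirst]
    · have hnonneg := ih (by omega)
      have hne_zero := hne n hn (by omega)
      split <;> omega

theorem height_pos_of_eq_false (h0 : 0 < N) (hfirst : S ⟨0, h0⟩ = true)
    (hne : ∀ i, 1 ≤ i → i ≤ N - 1 → height N S i ≠ 0) (r : Fin N) (hr : S r = false) :
    0 < height N S r := by
  have hafter := height_nonneg S h0 hfirst hne (i := r + 1) r.isLt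
  rw [height_succ S r.isLt] at hafter
  simp only [Fin.eta, hr, Bool.false_eq_true, if_false] at hafter
  omega

end Height

theorem stmt1 (q : ℕ) (hq : 1 ≤ q) (S : Fin (2 * q) → Bool)
    (hne : ∀ i, 1 ≤ i → i ≤ 2 * q - 1 → height (2 * q) S i ≠ 0)
    (hfirst : S ⟨0, by omega⟩ = true)
    (B R : Finset (Fin (2 * q)))
    (hB : B = univ.filter (fun j => S j = true))
    (hR : R = univ.filter (fun j => S j = false))
    (j : ℕ) (hjB : j < B.card) (hjR : j < R.card) :
    ((B.orderIsoOfFin rfl ⟨j, hjB⟩ : Fin (2 * q)) : ℕ) <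
    ((R.orderIsoOfFin rfl ⟨j, hjR⟩ : Fin (2 * q)) : ℕ) := by
  set r : Fin (2 * q) := (R.orderIsoOfFin rfl ⟨j, hjR⟩ : Fin (2 * q))
  have hr : S r = false := by
    have hrR : r ∈ R := (R.orderIsoOfFin rfl ⟨j, hjR⟩).2
    rw [hR, mem_filter] at hrR
    exact hrR.2
  have hpos := height_pos_of_eq_false S _ hfirst hne r hr
  rw [height_eq_card_filter_lt_sub, ← hB, ← hR, R.card_filter_lt_orderIsoOfFin rfl] at hpos
  exact B.orderIsoOfFin_lt_of_lt_card_filter_lt rfl _ (by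
    simp only at hpos ⊢
    omega)
end

section
/- Let S be a sequence of 2q letters colored blue or red with height function h as above, satisfying h(2q)=0, h(i)≠0 for 1 ≤ i ≤ 2q−1, and the first letter is red. Then for each j, the position of the j-th red letter strictly precedes the position of the j-th blue letter. -/
open Finset

private lemma aux_image {α : Type*} [LinearOrder α] (s : Finset α) {n : ℕ}
    (hs : s.card = n) (t : Finset (Fin n)) :
    (t.image (fun k => (s.orderIsoOfFin hs k : α))).card = t.card := by
  apply Finset.card_image_of_injective
  intro a b hab
  exact (s.orderIsoOfFin hs).injective (Subtype.coe_injective hab)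

private lemma aux_lt {α : Type*} [LinearOrder α] (s : Finset α) {n : ℕ}
    (hs : s.card = n) (j : Fin n) :
    (s.filter (fun x => x < (s.orderIsoOfFin hs j : α))).card = j := by
  have key : s.filter (fun x => x < (s.orderIsoOfFin hs j : α)) =
      (Finset.Iio j).image (fun k => (s.orderIsoOfFin hs k : α)) := by
    ext x
    simp only [Finset.mem_filter, Finset.mem_image, Finset.mem_Iio]
    constructor
    · rintro ⟨hx, hlt⟩
      refine ⟨(s.orderIsoOfFin hs).symm ⟨x, hx⟩, ?_, by simp⟩
      rw [← (s.orderIsoOfFin hs).lt_iff_lt, OrderIso.apply_symm_apply]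
      exact hlt
    · rintro ⟨k, hk, rfl⟩
      refine ⟨(s.orderIsoOfFin hs k).2, ?_⟩
      exact_mod_cast (s.orderIsoOfFin hs).lt_iff_lt.mpr hk
  rw [key, aux_image, Fin.card_Iio]

private lemma aux_le {α : Type*} [LinearOrder α] (s : Finset α) {n : ℕ}
    (hs : s.card = n) (j : Fin n) :
    (s.filter (fun x => x ≤ (s.orderIsoOfFin hs j : α))).card = j + 1 := by
  have key : s.filter (fun x => x ≤ (s.orderIsoOfFin hs j : α)) =
      (Finset.Iic j).image (fun k => (s.orderIsoOfFin hs k : α)) := by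
    ext x
    simp only [Finset.mem_filter, Finset.mem_image, Finset.mem_Iic]
    constructor
    · rintro ⟨hx, hle⟩
      refine ⟨(s.orderIsoOfFin hs).symm ⟨x, hx⟩, ?_, by simp⟩
      rw [← (s.orderIsoOfFin hs).le_iff_le, OrderIso.apply_symm_apply]
      exact hle
    · rintro ⟨k, hk, rfl⟩
      refine ⟨(s.orderIsoOfFin hs k).2, ?_⟩
      exact_mod_cast (s.orderIsoOfFin hs).le_iff_le.mpr hk
  rw [key, aux_image, Fin.card_Iic]

private lemma height_step {N : ℕ} (S : Fin N → Bool) (i : ℕ) (hi : i < N) :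
    height N S (i + 1) ≤ height N S i + 1 := by
  have hb : (univ.filter (fun j : Fin N => j.val < i + 1 ∧ S j = true)).card ≤
      (univ.filter (fun j : Fin N => j.val < i ∧ S j = true)).card + 1 := by
    have hsub : univ.filter (fun j : Fin N => j.val < i + 1 ∧ S j = true) ⊆
        insert ⟨i, hi⟩ (univ.filter (fun j : Fin N => j.val < i ∧ S j = true)) := by
      intro x hx
      simp only [Finset.mem_filter, Finset.mem_univ, true_and] at hx
      rcases Nat.lt_succ_iff_lt_or_eq.mp hx.1 with h | h
      · exact Finset.mem_insert_of_mem (by simp [h, hx.2])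
      · exact Finset.mem_insert.mpr (Or.inl (Fin.ext h))
    calc _ ≤ (insert (⟨i, hi⟩ : Fin N)
          (univ.filter (fun j : Fin N => j.val < i ∧ S j = true))).card :=
        Finset.card_le_card hsub
      _ ≤ _ := Finset.card_insert_le _ _
  have hr : (univ.filter (fun j : Fin N => j.val < i ∧ S j = false)).card ≤
      (univ.filter (fun j : Fin N => j.val < i + 1 ∧ S j = false)).card := by
    apply Finset.card_le_card
    intro x hx
    simp only [Finset.mem_filter, Finset.mem_univ, true_and] at hx ⊢
    exact ⟨by omega, hx.2⟩
  unfold height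
  push_cast
  omega

private lemma height_neg (q : ℕ) (hq : 1 ≤ q) (S : Fin (2 * q) → Bool)
    (hne : ∀ i, 1 ≤ i → i ≤ 2 * q - 1 → height (2 * q) S i ≠ 0)
    (hfirst : S ⟨0, by omega⟩ = false) :
    ∀ i, 1 ≤ i → i ≤ 2 * q - 1 → height (2 * q) S i ≤ -1 := by
  have h1 : height (2 * q) S 1 = -1 := by
    have hb : univ.filter (fun j : Fin (2 * q) => j.val < 1 ∧ S j = true) = ∅ := by
      ext x
      simp only [Finset.mem_filter, Finset.mem_univ, true_and, Finset.notMem_empty,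
        iff_false, not_and]
      intro hx
      have : x = ⟨0, by omega⟩ := Fin.ext (Nat.lt_one_iff.mp hx)
      rw [this, hfirst]; simp
    have hr : univ.filter (fun j : Fin (2 * q) => j.val < 1 ∧ S j = false) =
        {(⟨0, by omega⟩ : Fin (2 * q))} := by
      ext x
      simp only [Finset.mem_filter, Finset.mem_univ, true_and, Finset.mem_singleton,
        Fin.ext_iff]
      constructor
      · rintro ⟨hx, _⟩; omega
      · intro hx
        have : x = ⟨0, by omega⟩ := Fin.ext hx
        rw [this, hfirst]
        exact ⟨by omega, rfl⟩
    unfold height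
    rw [hb, hr]
    simp
  intro i hi1 hi2
  induction i with
  | zero => omega
  | succ n ih =>
    rcases Nat.eq_or_lt_of_le hi1 with h | h
    · rw [← h]; exact le_of_eq h1
    · have hn1 : 1 ≤ n := by omega
      have hn2 : n ≤ 2 * q - 1 := by omega
      have hstep := height_step S n (by omega)
      have := ih hn1 hn2
      have hnz := hne (n + 1) (by omega) hi2
      omega

theorem stmt2 (q : ℕ) (hq : 1 ≤ q) (S : Fin (2 * q) → Bool)
    (hlast : height (2 * q) S (2 * q) = 0)
    (hne : ∀ i, 1 ≤ i → i ≤ 2 * q - 1 → height (2 * q) S i ≠ 0)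
    (hfirst : S ⟨0, by omega⟩ = false)
    (B R : Finset (Fin (2 * q)))
    (hB : B = univ.filter (fun j => S j = true))
    (hR : R = univ.filter (fun j => S j = false))
    (j : ℕ) (hjB : j < B.card) (hjR : j < R.card) :
    ((R.orderIsoOfFin rfl ⟨j, hjR⟩ : Fin (2 * q)) : ℕ) <
    ((B.orderIsoOfFin rfl ⟨j, hjB⟩ : Fin (2 * q)) : ℕ) := by
  set b : Fin (2 * q) := (B.orderIsoOfFin rfl ⟨j, hjB⟩ : Fin (2 * q)) with hbdef
  set r : Fin (2 * q) := (R.orderIsoOfFin rfl ⟨j, hjR⟩ : Fin (2 * q)) with hrdef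
  have hbB : b ∈ B := (B.orderIsoOfFin rfl ⟨j, hjB⟩).2
  have hSb : S b = true := by
    rw [hB] at hbB
    exact (Finset.mem_filter.mp hbB).2
  -- blue count up to b.val + 1 equals j + 1
  have hblue : univ.filter (fun x : Fin (2 * q) => x.val < b.val + 1 ∧ S x = true) =
      B.filter (fun x => x ≤ b) := by
    ext x
    simp only [Finset.mem_filter, Finset.mem_univ, true_and, hB, Fin.le_def]
    constructor
    · rintro ⟨h1, h2⟩; exact ⟨h2, by omega⟩
    · rintro ⟨h2, h1⟩; exact ⟨by omega, h2⟩
  have hbluecard : (univ.filter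
      (fun x : Fin (2 * q) => x.val < b.val + 1 ∧ S x = true)).card = j + 1 := by
    rw [hblue]
    exact aux_le B rfl ⟨j, hjB⟩
  -- red count up to b.val + 1 equals reds strictly below b
  have hred : univ.filter (fun x : Fin (2 * q) => x.val < b.val + 1 ∧ S x = false) =
      R.filter (fun x => x < b) := by
    ext x
    simp only [Finset.mem_filter, Finset.mem_univ, true_and, hR, Fin.lt_def]
    constructor
    · rintro ⟨h1, h2⟩
      refine ⟨h2, ?_⟩
      rcases Nat.lt_succ_iff_lt_or_eq.mp h1 with h | h
      · exact h
      · exfalso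
        have : x = b := Fin.ext h
        rw [this, hSb] at h2
        simp at h2
    · rintro ⟨h2, h1⟩; exact ⟨by omega, h2⟩
  -- the count of reds below b is at least j + 1
  have hcount : j + 1 ≤ (R.filter (fun x => x < b)).card := by
    have hht := hlast
    have hb2q : b.val < 2 * q := b.isLt
    have : height (2 * q) S (b.val + 1) =
        (j + 1 : ℤ) - ((R.filter (fun x => x < b)).card : ℤ) := by
      unfold height
      rw [hbluecard, hred]
      push_cast
      ring
    by_cases hcase : b.val + 1 ≤ 2 * q - 1
    · have := height_neg q hq S hne hfirst (b.val + 1) (by omega) hcase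
      omega
    · have heq : b.val + 1 = 2 * q := by omega
      rw [heq, hlast] at this
      omega
  -- count of reds below r is exactly j
  have hrcount : (R.filter (fun x => x < r)).card = j := aux_lt R rfl ⟨j, hjR⟩
  by_contra hcon
  push_neg at hcon
  have hble : b ≤ r := Fin.le_def.mpr hcon
  have hsub : R.filter (fun x => x < b) ⊆ R.filter (fun x => x < r) := by
    intro x hx
    simp only [Finset.mem_filter] at hx ⊢
    exact ⟨hx.1, lt_of_lt_of_le hx.2 hble⟩
  have := Finset.card_le_card hsub
  omega
end

section
/- Let G be a tree and I an independent set of G. Suppose P = (p_1, …, p_k) is a path in G with k odd and k ≥ 3, I ∩ P = {p_1, p_3, …, p_k}, deg(p_1) = deg(p_k) = 1, and deg(p_3) = deg(p_5) = ⋯ = deg(p_{k−2}) = 2 (degrees in G). Then no token on a vertex of I ∩ P can be slid: for every v ∈ I ∩ P and every neighbor u of v in G, the set (I \ {v}) ∪ {u} is not an independent set of G. -/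
set_option maxHeartbeats 2000000


/-- An independent set of a graph. -/
def IndepSet {V : Type*} (G : SimpleGraph V) (s : Set V) : Prop :=
  s.Pairwise fun v w => ¬ G.Adj v w

lemma deg_one_unique {V : Type*} [Fintype V] (G : SimpleGraph V) [DecidableRel G.Adj]
    {w a b : V} (h : G.degree w = 1) (ha : G.Adj w a) (hb : G.Adj w b) : a = b := by
  have h' : (G.neighborFinset w).card = 1 := by
    rwa [G.card_neighborFinset_eq_degree]
  obtain ⟨x, hx⟩ := Finset.card_eq_one.mp h'
  have ha' : a ∈ G.neighborFinset w := by simpa [SimpleGraph.mem_neighborFinset] using ha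
  have hb' : b ∈ G.neighborFinset w := by simpa [SimpleGraph.mem_neighborFinset] using hb
  rw [hx, Finset.mem_singleton] at ha' hb'
  rw [ha', hb']

lemma deg_two_mem {V : Type*} [Fintype V] [DecidableEq V] (G : SimpleGraph V)
    [DecidableRel G.Adj] {w a b c : V} (h : G.degree w = 2) (hab : a ≠ b)
    (ha : G.Adj w a) (hb : G.Adj w b) (hc : G.Adj w c) : c = a ∨ c = b := by
  have hsub : ({a, b} : Finset V) ⊆ G.neighborFinset w := by
    intro x hx
    simp only [Finset.mem_insert, Finset.mem_singleton] at hx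
    rcases hx with rfl | rfl <;> simpa [SimpleGraph.mem_neighborFinset]
  have hcard : (G.neighborFinset w).card ≤ ({a, b} : Finset V).card := by
    rw [Finset.card_pair hab, G.card_neighborFinset_eq_degree, h]
  have heq := Finset.eq_of_subset_of_card_le hsub hcard
  have hc' : c ∈ ({a, b} : Finset V) := by
    rw [heq]; simpa [SimpleGraph.mem_neighborFinset] using hc
  simpa using hc'

/-- No token on a locked path of a tree can be slid. -/
theorem stmt11 {V : Type*} [Fintype V] [DecidableEq V]
    (G : SimpleGraph V) [DecidableRel G.Adj] (hG : G.IsTree)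
    (I : Set V) (hI : IndepSet G I)
    (k : ℕ) (hk : 3 ≤ k) (hodd : Odd k)
    (p : Fin k → V) (hinj : Function.Injective p)
    (hpath : ∀ i : ℕ, (h : i + 1 < k) → G.Adj (p ⟨i, by omega⟩) (p ⟨i + 1, h⟩))
    (hIP : ∀ i : Fin k, (p i ∈ I ↔ Even i.val))
    (hdeg1 : G.degree (p ⟨0, by omega⟩) = 1)
    (hdegk : G.degree (p ⟨k - 1, by omega⟩) = 1)
    (hdeg2 : ∀ i : Fin k, Even i.val → 2 ≤ i.val → i.val ≤ k - 3 → G.degree (p i) = 2) :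
    ∀ v ∈ I, (∃ i : Fin k, p i = v) →
      ∀ u : V, G.Adj v u → ¬ IndepSet G (insert u (I \ {v})) := by
  obtain ⟨n, hn⟩ := hodd
  rintro v hv ⟨i, rfl⟩ u hadj hind
  have hie : Even i.val := (hIP i).1 hv
  obtain ⟨m, hm⟩ := hie
  have hik : i.val < k := i.isLt
  -- the key finishing move
  have final : ∀ (j j' : ℕ) (hj : j < k) (hj' : j' < k),
      u = p ⟨j, hj⟩ → G.Adj (p ⟨j, hj⟩) (p ⟨j', hj'⟩) → Even j' → j' ≠ i.val → False := by
    intro j j' hj hj' hu hadj' he hne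
    have hwI : p ⟨j', hj'⟩ ∈ I := (hIP _).2 he
    have hwv : p ⟨j', hj'⟩ ≠ p i := by
      intro h
      exact hne (congrArg Fin.val (hinj h))
    have hmem1 : u ∈ insert u (I \ {p i}) := Set.mem_insert _ _
    have hmem2 : p ⟨j', hj'⟩ ∈ insert u (I \ {p i}) :=
      Set.mem_insert_of_mem _ ⟨hwI, hwv⟩
    have hne2 : u ≠ p ⟨j', hj'⟩ := hu ▸ hadj'.ne
    exact hind hmem1 hmem2 hne2 (hu ▸ hadj')
  by_cases h0 : i.val = 0
  · -- i = 0 : u = p 1, which is adjacent to p 2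
    have hi : i = ⟨0, by omega⟩ := Fin.ext h0
    rw [hi] at hadj
    have h01 : G.Adj (p ⟨0, by omega⟩) (p ⟨1, by omega⟩) := hpath 0 (by omega)
    have hu : u = p ⟨1, by omega⟩ := deg_one_unique G hdeg1 hadj h01
    exact final 1 2 (by omega) (by omega) hu (hpath 1 (by omega)) (by decide)
      (by omega)
  · by_cases hlast : i.val = k - 1
    · -- i = k-1 : u = p (k-2), adjacent to p (k-3)
      have hi : i = ⟨k - 1, by omega⟩ := Fin.ext hlast
      rw [hi] at hadj
      have h1 : G.Adj (p ⟨k - 1, by omega⟩) (p ⟨k - 2, by omega⟩) := by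
        have pf : k - 2 + 1 < k := by omega
        have t := hpath (k - 2) pf
        have e1 : p ⟨k - 2 + 1, pf⟩ = p ⟨k - 1, by omega⟩ := congrArg p (Fin.ext (by simp; omega))
        rw [e1] at t
        exact t.symm
      have hu : u = p ⟨k - 2, by omega⟩ := deg_one_unique G hdegk hadj h1
      have h2 : G.Adj (p ⟨k - 2, by omega⟩) (p ⟨k - 3, by omega⟩) := by
        have pf : k - 3 + 1 < k := by omega
        have t := hpath (k - 3) pf
        have e2 : p ⟨k - 3 + 1, pf⟩ = p ⟨k - 2, by omega⟩ := congrArg p (Fin.ext (by simp; omega))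
        rw [e2] at t
        exact t.symm
      exact final (k - 2) (k - 3) (by omega) (by omega) hu h2 ⟨n - 1, by omega⟩ (by omega)
    · -- middle case : 2 ≤ i.val ≤ k - 3
      have h2le : 2 ≤ i.val := by omega
      have hle3 : i.val ≤ k - 3 := by omega
      have hdeg : G.degree (p i) = 2 := hdeg2 i ⟨m, hm⟩ h2le hle3
      have hprev : G.Adj (p i) (p ⟨i.val - 1, by omega⟩) := by
        have pf : i.val - 1 + 1 < k := by omega
        have t := hpath (i.val - 1) pf
        have ei : p ⟨i.val - 1 + 1, pf⟩ = p i := congrArg p (Fin.ext (by simp; omega))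
        rw [ei] at t
        exact t.symm
      have hnext : G.Adj (p i) (p ⟨i.val + 1, by omega⟩) := by
        have pf : i.val + 1 < k := by omega
        have t := hpath i.val pf
        have ei2 : p (⟨i.val, by omega⟩ : Fin k) = p i := congrArg p (Fin.ext rfl)
        rwa [ei2] at t
      have hab : p ⟨i.val - 1, by omega⟩ ≠ p ⟨i.val + 1, by omega⟩ := by
        intro h
        have := congrArg Fin.val (hinj h)
        simp only [] at this
        omega
      rcases deg_two_mem G hdeg hab hprev hnext hadj with hu | hu
      · -- u = p (i-1), adjacent to p (i-2)
        have h3 : G.Adj (p ⟨i.val - 1, by omega⟩) (p ⟨i.val - 2, by omega⟩) := by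
          have pf : i.val - 2 + 1 < k := by omega
          have t := hpath (i.val - 2) pf
          have e3 : p ⟨i.val - 2 + 1, pf⟩ = p ⟨i.val - 1, by omega⟩ :=
            congrArg p (Fin.ext (by simp; omega))
          rw [e3] at t
          exact t.symm
        exact final (i.val - 1) (i.val - 2) (by omega) (by omega) hu h3 ⟨m - 1, by omega⟩
          (by omega)
      · -- u = p (i+1), adjacent to p (i+2)
        exact final (i.val + 1) (i.val + 2) (by omega) (by omega) hu
          (hpath (i.val + 1) (by omega)) ⟨m + 1, by omega⟩ (by omega)
end

section
/- Let I = (a_1 < ⋯ < a_k) and J = (b_1 < ⋯ < b_k) be independent sets of the path graph on n vertices (gaps ≥ 2). Then there exists a token-sliding reconfiguration sequence from I to J of length exactly Σ_{i=1}^k |a_i − b_i| slides; in particular any two equal-size independent sets of a path are reconfigurable. -/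
/-- One token slide on a path, in the increasing-tuple representation: exactly one
coordinate changes by `±1`. -/
def TupleStep (k : ℕ) (a a' : Fin k → ℕ) : Prop :=
  ∃ j : Fin k, (a' j = a j + 1 ∨ a' j + 1 = a j) ∧ ∀ i : Fin k, i ≠ j → a' i = a i

/-- A valid configuration of `k` tokens on the path with `n` vertices (positions
`0, …, n-1`): an increasing tuple with consecutive gaps at least 2. -/
def ValidConfig (n k : ℕ) (a : Fin k → ℕ) : Prop :=
  (∀ i : Fin k, a i < n) ∧ ∀ i j : Fin k, i < j → a i + 2 ≤ a j

lemma move_step (n k : ℕ) (a b : Fin k → ℕ)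
    (ha : ValidConfig n k a) (hb : ValidConfig n k b) (hne : a ≠ b) :
    ∃ a', ValidConfig n k a' ∧ TupleStep k a a' ∧
      (∑ i : Fin k, ((a' i : ℤ) - (b i : ℤ)).natAbs) + 1
        = ∑ i : Fin k, ((a i : ℤ) - (b i : ℤ)).natAbs := by
  by_cases hup : ∃ j : Fin k, a j < b j
  · -- move the largest such index up
    set S := Finset.univ.filter (fun j : Fin k => a j < b j) with hS
    have hSne : S.Nonempty := by
      obtain ⟨j, hj⟩ := hup
      exact ⟨j, by simp [hS, hj]⟩
    set j := S.max' hSne with hj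
    have hjS : j ∈ S := S.max'_mem hSne
    have hjlt : a j < b j := by simpa [hS] using hjS
    have hmax : ∀ i : Fin k, j < i → b i ≤ a i := by
      intro i hi
      by_contra h
      push_neg at h
      have : i ∈ S := by simp [hS, h]
      exact absurd (S.le_max' i this) (not_le.mpr hi)
    refine ⟨Function.update a j (a j + 1), ⟨?_, ?_⟩, ⟨j, ?_, ?_⟩, ?_⟩
    · intro i
      by_cases hij : i = j
      · subst hij
        simp only [Function.update_self]
        exact lt_of_le_of_lt hjlt (hb.1 j)
      · simpa [Function.update_of_ne hij] using ha.1 i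
    · intro i i' hii'
      by_cases hi : i = j <;> by_cases hi' : i' = j
      · omega
      · subst hi
        have h3 : b j + 2 ≤ b i' := hb.2 j i' hii'
        have h4 : b i' ≤ a i' := hmax i' hii'
        have h5 : a j < b j := hjlt
        simp only [Function.update_self, Function.update_of_ne hi']
        omega
      · subst hi'
        have := ha.2 i j hii'
        simp only [Function.update_self, Function.update_of_ne hi]
        omega
      · simp only [Function.update_of_ne hi, Function.update_of_ne hi']
        exact ha.2 i i' hii'
    · left; simp
    · intro i hi; simp [Function.update_of_ne hi]
    · rw [← Finset.sum_erase_add _ _ (Finset.mem_univ j),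
          ← Finset.sum_erase_add _ _ (Finset.mem_univ j)]
      have heq : ∀ i ∈ Finset.univ.erase j,
          (((Function.update a j (a j + 1)) i : ℤ) - (b i : ℤ)).natAbs
            = ((a i : ℤ) - (b i : ℤ)).natAbs := by
        intro i hi
        rw [Function.update_of_ne (Finset.ne_of_mem_erase hi)]
      rw [Finset.sum_congr rfl heq]
      simp only [Function.update_self]
      omega
  · -- move the smallest index with a j > b j down
    push_neg at hup
    have hdn : ∃ j : Fin k, b j < a j := by
      by_contra h
      push_neg at h
      exact hne (funext fun i => le_antisymm (h i) (hup i))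
    set S := Finset.univ.filter (fun j : Fin k => b j < a j) with hS
    have hSne : S.Nonempty := by
      obtain ⟨j, hj⟩ := hdn
      exact ⟨j, by simp [hS, hj]⟩
    set j := S.min' hSne with hj
    have hjS : j ∈ S := S.min'_mem hSne
    have hjlt : b j < a j := by simpa [hS] using hjS
    have hmin : ∀ i : Fin k, i < j → a i ≤ b i := by
      intro i hi
      by_contra h
      push_neg at h
      have : i ∈ S := by simp [hS, h]
      exact absurd (S.min'_le i this) (not_le.mpr hi)
    refine ⟨Function.update a j (a j - 1), ⟨?_, ?_⟩, ⟨j, ?_, ?_⟩, ?_⟩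
    · intro i
      by_cases hij : i = j
      · subst hij
        simp only [Function.update_self]
        have := ha.1 j; omega
      · simpa [Function.update_of_ne hij] using ha.1 i
    · intro i i' hii'
      by_cases hi : i = j <;> by_cases hi' : i' = j
      · omega
      · subst hi
        have := ha.2 j i' hii'
        simp only [Function.update_self, Function.update_of_ne hi']
        omega
      · subst hi'
        have h1 : a i ≤ b i := hmin i hii'
        have h2 : b i + 2 ≤ b j := hb.2 i j hii'
        simp only [Function.update_self, Function.update_of_ne hi]
        omega
      · simp only [Function.update_of_ne hi, Function.update_of_ne hi']
        exact ha.2 i i' hii'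
    · right
      simp only [Function.update_self]
      omega
    · intro i hi; simp [Function.update_of_ne hi]
    · rw [← Finset.sum_erase_add _ _ (Finset.mem_univ j),
          ← Finset.sum_erase_add _ _ (Finset.mem_univ j)]
      have heq : ∀ i ∈ Finset.univ.erase j,
          (((Function.update a j (a j - 1)) i : ℤ) - (b i : ℤ)).natAbs
            = ((a i : ℤ) - (b i : ℤ)).natAbs := by
        intro i hi
        rw [Function.update_of_ne (Finset.ne_of_mem_erase hi)]
      rw [Finset.sum_congr rfl heq]
      simp only [Function.update_self]
      have : (1:ℤ) ≤ a j := by exact_mod_cast Nat.one_le_iff_ne_zero.mpr (by omega)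
      have hc : ((a j - 1 : ℕ) : ℤ) = (a j : ℤ) - 1 := by
        push_cast [Nat.cast_sub (by omega : 1 ≤ a j)]; ring
      rw [hc]
      omega

/-- Between any two equal-size independent sets of a path there is a token-sliding
reconfiguration sequence of length exactly `Σ |a_i - b_i|`; in particular any two
equal-size independent sets of a path are reconfigurable. -/
theorem stmt15 (n k : ℕ) (a b : Fin k → ℕ)
    (ha : ValidConfig n k a) (hb : ValidConfig n k b) :
    ∃ (ℓ : ℕ) (f : ℕ → (Fin k → ℕ)),
      f 0 = a ∧ f ℓ = b ∧
      (∀ i, i ≤ ℓ → ValidConfig n k (f i)) ∧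
      (∀ i, i < ℓ → TupleStep k (f i) (f (i + 1))) ∧
      ℓ = ∑ i : Fin k, ((a i : ℤ) - (b i : ℤ)).natAbs := by
  suffices h : ∀ d (a : Fin k → ℕ), ValidConfig n k a →
      (∑ i : Fin k, ((a i : ℤ) - (b i : ℤ)).natAbs) = d →
      ∃ f : ℕ → (Fin k → ℕ), f 0 = a ∧ f d = b ∧
        (∀ i, i ≤ d → ValidConfig n k (f i)) ∧
        (∀ i, i < d → TupleStep k (f i) (f (i + 1))) by
    obtain ⟨f, h1, h2, h3, h4⟩ :=
      h (∑ i : Fin k, ((a i : ℤ) - (b i : ℤ)).natAbs) a ha rfl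
    exact ⟨_, f, h1, h2, h3, h4, rfl⟩
  intro d
  induction d with
  | zero =>
    intro a ha hsum
    have hab : a = b := by
      funext i
      have : ((a i : ℤ) - (b i : ℤ)).natAbs = 0 := by
        have := Finset.sum_eq_zero_iff.mp hsum i (Finset.mem_univ i)
        exact this
      omega
    subst hab
    exact ⟨fun _ => a, rfl, rfl, fun i _ => ha, fun i hi => absurd hi (Nat.not_lt_zero i)⟩
  | succ d ih =>
    intro a ha hsum
    have hne : a ≠ b := by
      rintro rfl
      simp at hsum
    obtain ⟨a', ha', hstep, hsum'⟩ := move_step n k a b ha hb hne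
    obtain ⟨f', h1, h2, h3, h4⟩ := ih a' ha' (by omega)
    refine ⟨fun i => if i = 0 then a else f' (i - 1), by simp, ?_, ?_, ?_⟩
    · simp [h2]
    · intro i hi
      by_cases h0 : i = 0
      · simpa [h0] using ha
      · simp only [h0, if_false]
        exact h3 (i - 1) (by omega)
    · intro i hi
      by_cases h0 : i = 0
      · subst h0
        simpa [h1] using hstep
      · have he : i - 1 + 1 = i := by omega
        simp only [h0, if_false, Nat.add_eq_zero, one_ne_zero, and_false,
          Nat.add_sub_cancel]
        have ht := h4 (i - 1) (by omega)
        rwa [he] at ht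
end
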